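/- Let n ≥ 1. The game of Snort played on the untinted star K_{1,n} is equivalent to the game ±n = {n | −n}. -/

import Mathlib

/-! `SetTheory.PGame` has been removed from Mathlib; it is re-defined here with
its old meaning (Mathlib, December 2024). -/
universe u

namespace SetTheory

inductive PGame : Type (u + 1)
  | mk : ∀ α β : Type u, (α → PGame) → (β → PGame) → PGame

namespace PGame

def neg : PGame.{u} → PGame.{u}
  | mk xl xr xL xR => mk xr xl (fun j => neg (xR j)) (fun i => neg (xL i))

instance : Neg PGame.{u} := ⟨neg⟩

instance : Zero PGame.{u} := ⟨⟨PEmpty, PEmpty, PEmpty.elim, PEmpty.elim⟩⟩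

instance : One PGame.{u} := ⟨⟨PUnit, PEmpty, fun _ => 0, PEmpty.elim⟩⟩

def star : PGame.{u} := ⟨PUnit, PUnit, fun _ => 0, fun _ => 0⟩

noncomputable def add (x : PGame.{u}) : PGame.{u} → PGame.{u} :=
  PGame.rec (motive := fun _ => PGame.{u} → PGame.{u})
    (fun xl xr _ _ IHxl IHxr y =>
      PGame.rec (motive := fun _ => PGame.{u})
        (fun yl yr yL yR IHyl IHyr =>
          mk (xl ⊕ yl) (xr ⊕ yr)
            (Sum.elim (fun i => IHxl i (mk yl yr yL yR)) IHyl)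
            (Sum.elim (fun i => IHxr i (mk yl yr yL yR)) IHyr))
        y) x

noncomputable instance : Add PGame.{u} := ⟨add⟩

noncomputable instance : NatCast PGame.{u} := ⟨Nat.unaryCast⟩

noncomputable def leLf (x : PGame.{u}) : PGame.{u} → Prop × Prop :=
  PGame.rec (motive := fun _ => PGame.{u} → Prop × Prop)
    (fun _ _ _ _ IHxl IHxr y =>
      PGame.rec (motive := fun _ => Prop × Prop)
        (fun yl yr yL yR IHyl IHyr =>
          ((∀ i, (IHxl i (mk yl yr yL yR)).2) ∧ (∀ j, (IHyr j).2),
           (∃ j, (IHyl j).1) ∨ (∃ i, (IHxr i (mk yl yr yL yR)).1)))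
        y) x

instance : LE PGame.{u} := ⟨fun x y => (leLf x y).1⟩

def Equiv (x y : PGame.{u}) : Prop := x ≤ y ∧ y ≤ x

instance : HasEquiv PGame.{u} := ⟨Equiv⟩

end PGame

end SetTheory

open SetTheory

namespace SnortFormal

/-- The state of a vertex in a Snort position: untinted (`free`), tinted Blue,
tinted Red, or removed from play (`dead`). -/
inductive Cell : Type
  | free | blue | red | dead
deriving DecidableEq

/-- The effect on a neighbouring cell of Left playing next to it:
it becomes tinted Blue, and if it was tinted Red it is removed. -/
def tintB : Cell → Cell
  | .free => .blue
  | .blue => .blue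
  | .red  => .dead
  | .dead => .dead

/-- The effect on a neighbouring cell of Right playing next to it. -/
def tintR : Cell → Cell
  | .free => .red
  | .blue => .dead
  | .red  => .red
  | .dead => .dead

/-- The position resulting from Left playing on vertex `v`: `v` is removed and
all of its neighbours are tinted Blue (doubly-tinted vertices are removed). -/
def moveL {V : Type} [DecidableEq V] (G : SimpleGraph V) [DecidableRel G.Adj]
    (c : V → Cell) (v : V) : V → Cell :=
  fun w => if w = v then .dead else if G.Adj v w then tintB (c w) else c w

/-- The position resulting from Right playing on vertex `v`. -/
def moveR {V : Type} [DecidableEq V] (G : SimpleGraph V) [DecidableRel G.Adj]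
    (c : V → Cell) (v : V) : V → Cell :=
  fun w => if w = v then .dead else if G.Adj v w then tintR (c w) else c w

/-- The vertices still present in the position. -/
def aliveSet {V : Type} [Fintype V] (c : V → Cell) : Finset V :=
  Finset.univ.filter (fun v => c v ≠ Cell.dead)

theorem alive_move_lt {V : Type} [Fintype V] [DecidableEq V]
    (G : SimpleGraph V) [DecidableRel G.Adj] (c : V → Cell) (v : V)
    (hv : c v ≠ Cell.dead) (f : Cell → Cell) (hf : f Cell.dead = Cell.dead) :
    (aliveSet (fun w => if w = v then Cell.dead else if G.Adj v w then f (c w) else c w)).card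
      < (aliveSet c).card := by
  apply Finset.card_lt_card
  constructor
  · intro w hw
    simp only [aliveSet, Finset.mem_filter, Finset.mem_univ, true_and] at hw ⊢
    by_cases h : w = v
    · simp [h] at hw
    · simp only [h, if_false] at hw
      by_cases hadj : G.Adj v w
      · simp only [hadj, if_true] at hw
        intro hd
        rw [hd, hf] at hw
        exact hw rfl
      · simpa [hadj] using hw
  · intro hsub
    have hv' : v ∈ aliveSet c := by
      simp [aliveSet, hv]
    have := hsub hv'
    simp [aliveSet] at this

/-- The combinatorial pregame given by playing Snort on the graph `G` with
tinting `c`. Left may play on any vertex that is free or tinted Blue; Right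
may play on any vertex that is free or tinted Red. -/
def snort {V : Type} [Fintype V] [DecidableEq V] (G : SimpleGraph V) [DecidableRel G.Adj]
    (c : V → Cell) : PGame :=
  PGame.mk {v : V // c v = Cell.free ∨ c v = Cell.blue}
    {v : V // c v = Cell.free ∨ c v = Cell.red}
    (fun v => snort G (moveL G c v.1))
    (fun v => snort G (moveR G c v.1))
termination_by (aliveSet c).card
decreasing_by
  · exact alive_move_lt G c v.1 (by rcases v.2 with h | h <;> simp [h]) tintB rfl
  · exact alive_move_lt G c v.1 (by rcases v.2 with h | h <;> simp [h]) tintR rfl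

/-- Build a simple graph from a (not necessarily symmetric) Boolean adjacency
function by symmetrizing and removing loops. -/
def graphOfBool {W : Type} (f : W → W → Bool) : SimpleGraph W where
  Adj u v := u ≠ v ∧ (f u v ∨ f v u)
  symm := ⟨fun _ _ ⟨h1, h2⟩ => ⟨h1.symm, h2.symm⟩⟩
  loopless := ⟨fun _ h => h.1 rfl⟩

instance {W : Type} [DecidableEq W] (f : W → W → Bool) :
    DecidableRel (graphOfBool f).Adj :=
  fun u v => inferInstanceAs (Decidable (u ≠ v ∧ (f u v ∨ f v u)))

/-- The game `{A | B}` with unique Left option `A` and unique Right option `B`. -/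
def ofPair (A B : PGame) : PGame :=
  PGame.mk PUnit PUnit (fun _ => A) (fun _ => B)

/-- The game `±{A, B} = {A, B | −A, −B}`. -/
def pmPair (A B : PGame) : PGame :=
  PGame.mk Bool Bool (fun x => if x then A else B) (fun x => if x then -A else -B)


/-- `s(n)`: the game `0` if `n` is even and `* = {0 | 0}` if `n` is odd. -/
def sgame (n : ℕ) : PGame := if Even n then 0 else PGame.star

/-- The star `K_{1,n}`: centre `none`, leaves `some i`. -/
abbrev starGraph (n : ℕ) : SimpleGraph (Option (Fin n)) :=
  graphOfBool (fun u v =>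
    match u, v with
    | none, some _ => true
    | _, _ => false)

end SnortFormal

namespace SetTheory.PGame

def LeftMoves : PGame.{u} → Type u
  | mk l _ _ _ => l

def RightMoves : PGame.{u} → Type u
  | mk _ r _ _ => r

def moveLeft : (g : PGame.{u}) → LeftMoves g → PGame.{u}
  | mk _ _ L _ => L

def moveRight : (g : PGame.{u}) → RightMoves g → PGame.{u}
  | mk _ _ _ R => R

@[simp] theorem moveLeft_mk {xl xr : Type u} {xL : xl → PGame.{u}} {xR : xr → PGame.{u}} :
    (mk xl xr xL xR).moveLeft = xL := rfl

@[simp] theorem moveRight_mk {xl xr : Type u} {xL : xl → PGame.{u}} {xR : xr → PGame.{u}} :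
    (mk xl xr xL xR).moveRight = xR := rfl

def LF (x y : PGame.{u}) : Prop := (leLf x y).2

infix:50 " ⧏ " => LF

theorem le_mk {xl xr : Type u} {xL : xl → PGame.{u}} {xR : xr → PGame.{u}}
    {yl yr : Type u} {yL : yl → PGame.{u}} {yR : yr → PGame.{u}} :
    mk xl xr xL xR ≤ mk yl yr yL yR ↔
      (∀ i, xL i ⧏ mk yl yr yL yR) ∧ ∀ j, mk xl xr xL xR ⧏ yR j := Iff.rfl

theorem lf_mk {xl xr : Type u} {xL : xl → PGame.{u}} {xR : xr → PGame.{u}}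
    {yl yr : Type u} {yL : yl → PGame.{u}} {yR : yr → PGame.{u}} :
    mk xl xr xL xR ⧏ mk yl yr yL yR ↔
      (∃ j, mk xl xr xL xR ≤ yL j) ∨ ∃ i, xR i ≤ mk yl yr yL yR := Iff.rfl

theorem le_iff_forall_lf {x y : PGame.{u}} :
    x ≤ y ↔ (∀ i, x.moveLeft i ⧏ y) ∧ ∀ j, x ⧏ y.moveRight j := by
  cases x; cases y; exact le_mk

theorem lf_of_le_moveLeft {x y : PGame.{u}} {i : y.LeftMoves} (h : x ≤ y.moveLeft i) : x ⧏ y := by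
  cases x; cases y; exact lf_mk.2 (Or.inl ⟨i, h⟩)

theorem lf_of_moveRight_le {x y : PGame.{u}} {j : x.RightMoves} (h : x.moveRight j ≤ y) : x ⧏ y := by
  cases x; cases y; exact lf_mk.2 (Or.inr ⟨j, h⟩)

theorem pgame_le_refl (x : PGame.{u}) : x ≤ x := by
  induction x with
  | mk xl xr xL xR ihl ihr =>
    exact le_mk.2 ⟨fun i => lf_of_le_moveLeft (i := i) (ihl i),
      fun j => lf_of_moveRight_le (j := j) (ihr j)⟩

theorem le_trans_aux : ∀ x y z : PGame.{u}, (x ≤ y → y ≤ z → x ≤ z) ∧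
    (x ≤ y → y ⧏ z → x ⧏ z) ∧ (x ⧏ y → y ≤ z → x ⧏ z) := by
  intro x
  induction x with
  | mk xl xr xL xR ihxl ihxr =>
  intro y
  induction y with
  | mk yl yr yL yR ihyl ihyr =>
  intro z
  induction z with
  | mk zl zr zL zR ihzl ihzr =>
  refine ⟨fun hxy hyz => le_mk.2 ⟨fun i => ?_, fun j => ?_⟩, fun hxy hyz => ?_, fun hxy hyz => ?_⟩
  · exact (ihxl i _ _).2.2 ((le_mk.1 hxy).1 i) hyz
  · exact (ihzr j).2.1 hxy ((le_mk.1 hyz).2 j)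
  · rcases lf_mk.1 hyz with ⟨j, h⟩ | ⟨i, h⟩
    · exact lf_of_le_moveLeft (i := j) ((ihzl j).1 hxy h)
    · exact (ihyr i _).2.2 ((le_mk.1 hxy).2 i) h
  · rcases lf_mk.1 hxy with ⟨j, h⟩ | ⟨i, h⟩
    · exact (ihyl j _).2.1 h ((le_mk.1 hyz).1 j)
    · exact lf_of_moveRight_le (j := i) ((ihxr i _ _).1 h hyz)

theorem pgame_le_trans {x y z : PGame.{u}} : x ≤ y → y ≤ z → x ≤ z := (le_trans_aux x y z).1

theorem lf_of_le_of_lf {x y z : PGame.{u}} : x ≤ y → y ⧏ z → x ⧏ z := (le_trans_aux x y z).2.1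

instance : Preorder PGame.{u} where
  le x y := x ≤ y
  le_refl := pgame_le_refl
  le_trans := fun _ _ _ => pgame_le_trans

theorem neg_def {xl xr : Type u} {xL : xl → PGame.{u}} {xR : xr → PGame.{u}} :
    -mk xl xr xL xR = mk xr xl (fun j => -xR j) (fun i => -xL i) := rfl

theorem neg_neg (x : PGame.{u}) : -(-x) = x := by
  induction x with
  | mk xl xr xL xR ihl ihr =>
    show mk xl xr (fun i => -(-xL i)) (fun j => -(-xR j)) = mk xl xr xL xR
    simp only [ihl, ihr]

theorem neg_le_lf_neg_iff : ∀ x y : PGame.{u}, (-y ≤ -x ↔ x ≤ y) ∧ (-y ⧏ -x ↔ x ⧏ y) := by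
  intro x
  induction x with
  | mk xl xr xL xR ihxl ihxr =>
  intro y
  induction y with
  | mk yl yr yL yR ihyl ihyr =>
  rw [PGame.neg_def, PGame.neg_def]
  refine ⟨⟨fun h => ?_, fun h => ?_⟩, ⟨fun h => ?_, fun h => ?_⟩⟩
  · obtain ⟨h1, h2⟩ := le_mk.1 h
    exact le_mk.2 ⟨fun i => (ihxl i _).2.1 (h2 i), fun j => (ihyr j).2.1 (h1 j)⟩
  · obtain ⟨h1, h2⟩ := le_mk.1 h
    exact le_mk.2 ⟨fun j => (ihyr j).2.2 (h2 j), fun i => (ihxl i _).2.2 (h1 i)⟩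
  · rcases lf_mk.1 h with ⟨i, h'⟩ | ⟨j, h'⟩
    · exact lf_mk.2 (Or.inr ⟨i, (ihxr i _).1.1 h'⟩)
    · exact lf_mk.2 (Or.inl ⟨j, (ihyl j).1.1 h'⟩)
  · rcases lf_mk.1 h with ⟨j, h'⟩ | ⟨i, h'⟩
    · exact lf_mk.2 (Or.inr ⟨j, (ihyl j).1.2 h'⟩)
    · exact lf_mk.2 (Or.inl ⟨i, (ihxr i _).1.2 h'⟩)

theorem neg_le_neg_iff {x y : PGame.{u}} : -y ≤ -x ↔ x ≤ y := (neg_le_lf_neg_iff x y).1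

def toLeftMovesAdd {x y : PGame.{u}} : x.LeftMoves ⊕ y.LeftMoves ≃ (x + y).LeftMoves := by
  cases x; cases y; exact Equiv.refl _

theorem add_moveLeft_inl (x y : PGame.{u}) (i : x.LeftMoves) :
    (x + y).moveLeft (toLeftMovesAdd (Sum.inl i)) = x.moveLeft i + y := by
  cases x; cases y; rfl

theorem add_moveLeft_inr (x : PGame.{u}) {y : PGame.{u}} (i : y.LeftMoves) :
    (x + y).moveLeft (toLeftMovesAdd (Sum.inr i)) = x + y.moveLeft i := by
  cases x; cases y; rfl

theorem one_moveLeft (x : (1 : PGame.{u}).LeftMoves) : (1 : PGame.{u}).moveLeft x = 0 := rfl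

theorem nat_succ (n : ℕ) : ((n + 1 : ℕ) : PGame.{u}) = n + 1 := rfl

theorem add_zero_equiv (x : PGame.{u}) : x + 0 ≈ x := by
  induction x with
  | mk xl xr xL xR ihl ihr =>
    constructor
    · refine le_iff_forall_lf.2 ⟨?_, ?_⟩
      · rintro (i | i)
        · exact lf_of_le_moveLeft (i := i) (ihl i).1
        · exact PEmpty.elim i
      · intro j
        exact lf_of_moveRight_le (j := Sum.inl j) (ihr j).1
    · refine le_iff_forall_lf.2 ⟨?_, ?_⟩
      · intro i
        exact lf_of_le_moveLeft (i := Sum.inl i) (ihl i).2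
      · rintro (j | j)
        · exact lf_of_moveRight_le (j := j) (ihr j).2
        · exact PEmpty.elim j

theorem add_le_add_right_aux : ∀ x y z : PGame.{u},
    (x ≤ y → x + z ≤ y + z) ∧ (x ⧏ y → x + z ⧏ y + z) := by
  intro x
  induction x with
  | mk xl xr xL xR ihxl ihxr =>
  intro y
  induction y with
  | mk yl yr yL yR ihyl ihyr =>
  intro z
  induction z with
  | mk zl zr zL zR ihzl ihzr =>
  refine ⟨fun h => le_iff_forall_lf.2 ⟨?_, ?_⟩, fun h => ?_⟩
  · rintro (i | k)
    · exact (ihxl i _ _).2 ((le_mk.1 h).1 i)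
    · exact lf_of_le_moveLeft (i := Sum.inr k) ((ihzl k).1 h)
  · rintro (j | k)
    · exact (ihyr j _).2 ((le_mk.1 h).2 j)
    · exact lf_of_moveRight_le (j := Sum.inr k) ((ihzr k).1 h)
  · rcases lf_mk.1 h with ⟨j, h'⟩ | ⟨i, h'⟩
    · exact lf_of_le_moveLeft (i := Sum.inl j) ((ihyl j _).1 h')
    · exact lf_of_moveRight_le (j := Sum.inl i) ((ihxr i _ _).1 h')

theorem add_le_add_right {x y : PGame.{u}} (h : x ≤ y) (z : PGame.{u}) : x + z ≤ y + z :=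
  (add_le_add_right_aux x y z).1 h

instance isEmpty_zero_leftMoves : IsEmpty (LeftMoves (0 : PGame.{u})) := ⟨fun j => PEmpty.elim j⟩

theorem isEmpty_add_rightMoves : ∀ x y : PGame.{u}, IsEmpty x.RightMoves →
    IsEmpty y.RightMoves → IsEmpty (x + y).RightMoves
  | mk _ _ _ _, mk _ _ _ _, ⟨h1⟩, ⟨h2⟩ => ⟨fun j => by rcases j with a | b; exacts [h1 a, h2 b]⟩

instance isEmpty_nat_rightMoves : ∀ n : ℕ, IsEmpty (RightMoves (n : PGame.{u}))
  | 0 => ⟨fun j => PEmpty.elim j⟩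
  | n + 1 => isEmpty_add_rightMoves _ _ (isEmpty_nat_rightMoves n) ⟨fun j => PEmpty.elim j⟩

end SetTheory.PGame

namespace SnortFormal

/-! ### Auxiliary material for the proof -/

section Aux

open PGame

/-- Every left option of `↑k + 1` is at most `↑k`. -/
theorem natCast_add_one_moveLeft_le (k : ℕ) :
    ∀ i : ((k : PGame) + 1).LeftMoves, ((k : PGame) + 1).moveLeft i ≤ (k : PGame) := by
  induction k with
  | zero =>
    intro i
    rw [← PGame.toLeftMovesAdd.apply_symm_apply i]
    rcases PGame.toLeftMovesAdd.symm i with i0 | j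
    · exact PEmpty.elim i0
    · rw [PGame.add_moveLeft_inr, PGame.one_moveLeft]
      exact (PGame.add_zero_equiv _).1
  | succ k IH =>
    intro i
    rw [← PGame.toLeftMovesAdd.apply_symm_apply i]
    rcases PGame.toLeftMovesAdd.symm i with i0 | j
    · rw [PGame.add_moveLeft_inl]
      exact PGame.add_le_add_right (IH i0) 1
    · rw [PGame.add_moveLeft_inr, PGame.one_moveLeft]
      exact (PGame.add_zero_equiv _).1

theorem natCast_lf_succ (k : ℕ) : (k : PGame) ⧏ ((k + 1 : ℕ) : PGame) := by
  rw [PGame.nat_succ]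
  exact PGame.lf_of_le_moveLeft
    (i := PGame.toLeftMovesAdd (Sum.inr (PUnit.unit : (1 : PGame).LeftMoves)))
    (le_of_le_of_eq (PGame.add_zero_equiv _).2 ((PGame.add_moveLeft_inr (k : PGame) (y := 1)
      (PUnit.unit : (1 : PGame).LeftMoves)).trans
      (congrArg (fun t => (k : PGame) + t) (PGame.one_moveLeft _))).symm)

/-- Swapping the two colours. -/
def swapCell : Cell → Cell
  | .free => .free
  | .blue => .red
  | .red => .blue
  | .dead => .dead

lemma tintB_swap (x : Cell) : tintB (swapCell x) = swapCell (tintR x) := by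
  cases x <;> rfl

lemma tintR_swap (x : Cell) : tintR (swapCell x) = swapCell (tintB x) := by
  cases x <;> rfl

lemma swapCell_ne_dead {x : Cell} (h : swapCell x ≠ Cell.dead) : x ≠ Cell.dead := by
  cases x <;> simp_all [swapCell]

lemma moveL_swap {V : Type} [DecidableEq V] (G : SimpleGraph V) [DecidableRel G.Adj]
    (c : V → Cell) (v : V) :
    moveL G (fun w => swapCell (c w)) v = fun w => swapCell (moveR G c v w) := by
  funext w
  by_cases h : w = v
  · simp [moveL, moveR, h, swapCell]
  · by_cases hadj : G.Adj v w <;> simp [moveL, moveR, h, hadj, tintB_swap]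

lemma moveR_swap {V : Type} [DecidableEq V] (G : SimpleGraph V) [DecidableRel G.Adj]
    (c : V → Cell) (v : V) :
    moveR G (fun w => swapCell (c w)) v = fun w => swapCell (moveL G c v w) := by
  funext w
  by_cases h : w = v
  · simp [moveL, moveR, h, swapCell]
  · by_cases hadj : G.Adj v w <;> simp [moveL, moveR, h, hadj, tintR_swap]

/-- Swapping colours negates the Snort game. -/
theorem snort_swap {V : Type} [Fintype V] [DecidableEq V] (G : SimpleGraph V)
    [DecidableRel G.Adj] (c : V → Cell) :
    snort G (fun v => swapCell (c v)) ≈ -snort G c := by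
  rw [snort, snort, PGame.neg_def]
  constructor
  · rw [PGame.le_iff_forall_lf]
    constructor
    · rintro ⟨v, hv⟩
      have hv' : c v = Cell.free ∨ c v = Cell.red := by
        cases h : c v <;> simp [h, swapCell] at hv ⊢
      refine PGame.lf_of_le_moveLeft (i := ⟨v, hv'⟩) ?_
      simp only [PGame.moveLeft_mk]
      rw [moveL_swap]
      exact (snort_swap G (moveR G c v)).1
    · rintro ⟨v, hv⟩
      have hv' : swapCell (c v) = Cell.free ∨ swapCell (c v) = Cell.red := by
        cases h : c v <;> simp [h, swapCell] at hv ⊢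
      refine PGame.lf_of_moveRight_le (j := ⟨v, hv'⟩) ?_
      simp only [PGame.moveRight_mk]
      rw [moveR_swap]
      exact (snort_swap G (moveL G c v)).1
  · rw [PGame.le_iff_forall_lf]
    constructor
    · rintro ⟨v, hv⟩
      have hv' : swapCell (c v) = Cell.free ∨ swapCell (c v) = Cell.blue := by
        cases h : c v <;> simp [h, swapCell] at hv ⊢
      refine PGame.lf_of_le_moveLeft (i := ⟨v, hv'⟩) ?_
      simp only [PGame.moveLeft_mk]
      rw [moveL_swap]
      exact (snort_swap G (moveR G c v)).2
    · rintro ⟨v, hv⟩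
      have hv' : c v = Cell.free ∨ c v = Cell.blue := by
        cases h : c v <;> simp [h, swapCell] at hv ⊢
      refine PGame.lf_of_moveRight_le (j := ⟨v, hv'⟩) ?_
      simp only [PGame.moveRight_mk]
      rw [moveR_swap]
      exact (snort_swap G (moveL G c v)).2
termination_by (aliveSet c).card
decreasing_by
  all_goals first
    | exact alive_move_lt G c v (by cases hcv : c v <;> simp_all [swapCell]) tintR rfl
    | exact alive_move_lt G c v (by cases hcv : c v <;> simp_all [swapCell]) tintB rfl

variable {n : ℕ}

/-- Star position with centre dead and leaf `i` blue iff `b i`. -/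
def cB (b : Fin n → Bool) : Option (Fin n) → Cell
  | none => Cell.dead
  | some i => if b i then Cell.blue else Cell.dead

/-- Star position with centre blue and leaf `i` free iff `s i` (else dead). -/
def cC (s : Fin n → Bool) : Option (Fin n) → Cell
  | none => Cell.blue
  | some i => if s i then Cell.free else Cell.dead

def cnt (b : Fin n → Bool) : ℕ := (Finset.univ.filter fun i => b i = true).card

lemma cnt_true : cnt (fun _ : Fin n => true) = n := by simp [cnt]

lemma cnt_pos {b : Fin n → Bool} {i : Fin n} (h : b i = true) : 0 < cnt b :=
  Finset.card_pos.2 ⟨i, by simp [h]⟩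

lemma cnt_exists {b : Fin n → Bool} (h : 0 < cnt b) : ∃ i, b i = true := by
  obtain ⟨i, hi⟩ := Finset.card_pos.1 h
  exact ⟨i, by simpa using hi⟩

lemma cnt_update {b : Fin n → Bool} {i : Fin n} (h : b i = true) :
    cnt (Function.update b i false) = cnt b - 1 := by
  have : (Finset.univ.filter fun j => Function.update b i false j = true)
      = (Finset.univ.filter fun j => b j = true).erase i := by
    ext j
    by_cases hj : j = i <;> simp [Function.update, hj, h]
  rw [cnt, this, Finset.card_erase_of_mem (by simp [h])]
  rfl

lemma star_adj_none_some (i : Fin n) : (starGraph n).Adj none (some i) :=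
  ⟨by simp, Or.inl rfl⟩

lemma star_adj_some_none (i : Fin n) : (starGraph n).Adj (some i) none :=
  (star_adj_none_some i).symm

lemma star_not_adj_some_some (i j : Fin n) : ¬ (starGraph n).Adj (some i) (some j) := by
  rintro ⟨-, h | h⟩ <;> exact Bool.noConfusion h

lemma star_not_adj_none_none : ¬ (starGraph n).Adj (none : Option (Fin n)) none := fun h =>
  h.1 rfl

lemma moveL_free_none :
    moveL (starGraph n) (fun _ => Cell.free) none = cB (fun _ => true) := by
  funext w
  cases w with
  | none => simp [moveL, cB]
  | some j => simp [moveL, cB, star_adj_none_some j, tintB]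

lemma moveR_free_none :
    moveR (starGraph n) (fun _ => Cell.free) none
      = fun w => swapCell (cB (fun _ => true) w) := by
  funext w
  cases w with
  | none => simp [moveR, cB, swapCell]
  | some j => simp [moveR, cB, star_adj_none_some j, tintR, swapCell]

lemma moveL_free_some (i : Fin n) :
    moveL (starGraph n) (fun _ => Cell.free) (some i)
      = cC (Function.update (fun _ => true) i false) := by
  funext w
  cases w with
  | none => simp [moveL, cC, star_adj_some_none i, tintB]
  | some j =>
    by_cases hj : j = i
    · simp [moveL, cC, hj, Function.update]
    · simp [moveL, cC, hj, Function.update,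
        star_not_adj_some_some i j, Option.some_inj]

lemma moveL_cB {b : Fin n → Bool} {i : Fin n} (h : b i = true) :
    moveL (starGraph n) (cB b) (some i) = cB (Function.update b i false) := by
  funext w
  cases w with
  | none => simp [moveL, cB, star_adj_some_none i, tintB]
  | some j =>
    by_cases hj : j = i
    · simp [moveL, cB, hj, Function.update]
    · simp [moveL, cB, hj, Function.update,
        star_not_adj_some_some i j, Option.some_inj]

lemma moveL_cC_none {s : Fin n → Bool} :
    moveL (starGraph n) (cC s) none = cB s := by
  funext w
  cases w with
  | none => simp [moveL, cB, cC]
  | some j =>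
    cases hs : s j <;>
      simp [moveL, cB, cC, star_adj_none_some j, tintB, hs]

lemma moveL_cC_some {s : Fin n → Bool} {i : Fin n} (h : s i = true) :
    moveL (starGraph n) (cC s) (some i) = cC (Function.update s i false) := by
  funext w
  cases w with
  | none => simp [moveL, cC, star_adj_some_none i, tintB]
  | some j =>
    by_cases hj : j = i
    · simp [moveL, cC, hj, Function.update]
    · simp [moveL, cC, hj, Function.update,
        star_not_adj_some_some i j, Option.some_inj]

lemma cB_left_idx {b : Fin n → Bool} {v : Option (Fin n)}
    (hv : cB b v = Cell.free ∨ cB b v = Cell.blue) : ∃ i, v = some i ∧ b i = true := by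
  cases v with
  | none => simp [cB] at hv
  | some j =>
    refine ⟨j, rfl, ?_⟩
    cases hb : b j <;> simp [cB, hb] at hv ⊢

lemma cB_right_idx {b : Fin n → Bool} {v : Option (Fin n)}
    (hv : cB b v = Cell.free ∨ cB b v = Cell.red) : False := by
  cases v with
  | none => simp [cB] at hv
  | some j => cases hb : b j <;> simp [cB, hb] at hv

/-- The all-blue-leaves position is at most its number of leaves. -/
theorem cB_le (k : ℕ) : ∀ b : Fin n → Bool, cnt b = k →
    snort (starGraph n) (cB b) ≤ (k : PGame) := by
  induction k with
  | zero =>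
    intro b hk
    rw [snort, PGame.le_iff_forall_lf]
    constructor
    · rintro ⟨v, hv⟩
      obtain ⟨i, rfl, hi⟩ := cB_left_idx hv
      exact absurd (hk ▸ cnt_pos hi) (lt_irrefl 0)
    · intro j
      exact isEmptyElim j
  | succ k IH =>
    intro b hk
    rw [snort, PGame.le_iff_forall_lf]
    constructor
    · rintro ⟨v, hv⟩
      obtain ⟨i, rfl, hi⟩ := cB_left_idx hv
      simp only [PGame.moveLeft_mk]
      rw [moveL_cB hi]
      have hcnt : cnt (Function.update b i false) = k := by
        rw [cnt_update hi, hk]; omega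
        -- k+1-1 = k
      exact PGame.lf_of_le_of_lf (IH _ hcnt) (natCast_lf_succ k)
    · intro j
      exact isEmptyElim j

/-- The all-blue-leaves position is at least its number of leaves. -/
theorem cB_ge (k : ℕ) : ∀ b : Fin n → Bool, cnt b = k →
    (k : PGame) ≤ snort (starGraph n) (cB b) := by
  induction k with
  | zero =>
    intro b hk
    rw [snort, PGame.le_iff_forall_lf]
    constructor
    · intro i
      exact isEmptyElim (show (0 : PGame).LeftMoves from i)
    · rintro ⟨v, hv⟩
      exact absurd hv cB_right_idx
  | succ k IH =>
    intro b hk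
    obtain ⟨i, hi⟩ := cnt_exists (by omega : 0 < cnt b)
    rw [snort, PGame.le_iff_forall_lf]
    constructor
    · intro l
      refine PGame.lf_of_le_moveLeft (i := ⟨some i, Or.inr (by simp [cB, hi])⟩) ?_
      simp only [PGame.moveLeft_mk]
      rw [moveL_cB hi]
      refine (natCast_add_one_moveLeft_le k l).trans (IH _ ?_)
      rw [cnt_update hi, hk]; omega
    · rintro ⟨v, hv⟩
      exact absurd hv cB_right_idx

/-- The centre-blue, free-leaves position is at most (number of free leaves) + 1. -/
theorem cC_le (k : ℕ) : ∀ s : Fin n → Bool, cnt s = k →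
    snort (starGraph n) (cC s) ≤ ((k + 1 : ℕ) : PGame) := by
  induction k with
  | zero =>
    intro s hk
    rw [snort, PGame.le_iff_forall_lf]
    constructor
    · rintro ⟨v, hv⟩
      cases v with
      | none =>
        simp only [PGame.moveLeft_mk]
        rw [moveL_cC_none]
        exact PGame.lf_of_le_of_lf (cB_le 0 s hk) (natCast_lf_succ 0)
      | some j =>
        have hj : s j = true := by cases hs : s j <;> simp [cC, hs] at hv ⊢
        exact absurd (hk ▸ cnt_pos hj) (lt_irrefl 0)
    · intro j
      exact isEmptyElim j
  | succ k IH =>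
    intro s hk
    rw [snort, PGame.le_iff_forall_lf]
    constructor
    · rintro ⟨v, hv⟩
      cases v with
      | none =>
        simp only [PGame.moveLeft_mk]
        rw [moveL_cC_none]
        exact PGame.lf_of_le_of_lf (cB_le (k + 1) s hk) (natCast_lf_succ (k + 1))
      | some j =>
        have hj : s j = true := by cases hs : s j <;> simp [cC, hs] at hv ⊢
        simp only [PGame.moveLeft_mk]
        rw [moveL_cC_some hj]
        have hcnt : cnt (Function.update s j false) = k := by
          rw [cnt_update hj, hk]; omega
        exact PGame.lf_of_le_of_lf (IH _ hcnt) (natCast_lf_succ (k + 1))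
    · intro j
      exact isEmptyElim j

end Aux

/-- Snort on the untinted star `K_{1,n}` is `±n = {n | -n}`. -/
theorem snort_star_untinted (n : ℕ) (hn : 1 ≤ n) :
    snort (starGraph n) (fun _ => Cell.free)
      ≈ ofPair (n : PGame) (-(n : PGame)) := by
  have hallblue_le : snort (starGraph n) (cB (fun _ : Fin n => true)) ≤ (n : PGame) :=
    cB_le n _ cnt_true
  have hallblue_ge : (n : PGame) ≤ snort (starGraph n) (cB (fun _ : Fin n => true)) :=
    cB_ge n _ cnt_true
  have hST : snort (starGraph n) (fun _ => Cell.free) ≤ ofPair (n : PGame) (-(n : PGame)) := by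
    rw [snort, PGame.le_iff_forall_lf]
    constructor
    · rintro ⟨v, hv⟩
      refine PGame.lf_of_le_moveLeft (i := (PUnit.unit : (ofPair (n : PGame) _).LeftMoves)) ?_
      show _ ≤ (n : PGame)
      cases v with
      | none =>
        simp only [PGame.moveLeft_mk]
        rw [moveL_free_none]
        exact hallblue_le
      | some i =>
        simp only [PGame.moveLeft_mk]
        rw [moveL_free_some]
        have hcnt : cnt (Function.update (fun _ : Fin n => true) i false) = n - 1 := by
          rw [cnt_update rfl, cnt_true]
        have := cC_le (n - 1) _ hcnt
        rwa [show n - 1 + 1 = n by omega] at this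
    · intro j
      refine PGame.lf_of_moveRight_le (j := ⟨none, Or.inl rfl⟩) ?_
      show _ ≤ -(n : PGame)
      simp only [PGame.moveRight_mk]
      rw [moveR_free_none]
      exact ((snort_swap (starGraph n) (cB (fun _ : Fin n => true))).1).trans
        (PGame.neg_le_neg_iff.2 hallblue_ge)
  have hnegT : -(ofPair (n : PGame) (-(n : PGame))) = ofPair (n : PGame) (-(n : PGame)) := by
    simp [ofPair, PGame.neg_def, PGame.neg_neg]
  have hnegS : snort (starGraph n) (fun _ => Cell.free)
      ≈ -snort (starGraph n) (fun _ => Cell.free) :=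
    snort_swap (starGraph n) (fun _ => Cell.free)
  refine ⟨hST, ?_⟩
  calc ofPair (n : PGame) (-(n : PGame))
      = -(ofPair (n : PGame) (-(n : PGame))) := hnegT.symm
    _ ≤ -snort (starGraph n) (fun _ => Cell.free) := PGame.neg_le_neg_iff.2 hST
    _ ≤ snort (starGraph n) (fun _ => Cell.free) := hnegS.2
end SnortFormal
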